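/- Suppose u : 2^[n] → ℝ≥0 is a normalized, monotone, submodular and second-order supermodular set function and c : 2^[n] → ℝ≥0 is modular with positive singleton costs; let OPT > 0 denote the minimum objective value over all permutations of [n]. Let π be a permutation of [n] whose objective value equals M·OPT. Then either π is locally optimal with respect to insertions, or there exists a move-neighbor π′ of π whose objective value is at most (M − (M−4)/(2n))·OPT. -/

import Mathlib

open Finset

/-- The set of the first `k` elements of the list `L`. -/
def prefSet {n : ℕ} (L : List (Fin n)) (k : ℕ) : Finset (Fin n) := (L.take k).toFinset

/-- Marginal value `f(e|S) = f(S ∪ {e}) - f S`. -/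
noncomputable def marg {n : ℕ} (f : Finset (Fin n) → ℝ) (e : Fin n) (S : Finset (Fin n)) : ℝ :=
  f (insert e S) - f S

/-- `L` is a listing of all elements of `[n]` (a permutation of `[n]`). -/
def IsPermList {n : ℕ} (L : List (Fin n)) : Prop := L.Nodup ∧ ∀ x : Fin n, x ∈ L

/-- The objective value `∑_{i=1}^n c(S_i)(u(S_i) - u(S_{i-1}))`. -/
noncomputable def objective {n : ℕ} (u c : Finset (Fin n) → ℝ) (L : List (Fin n)) : ℝ :=
  ∑ i ∈ Finset.range L.length,
    c (prefSet L (i + 1)) * (u (prefSet L (i + 1)) - u (prefSet L i))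

/-- The element in (1-indexed) position `k` of the list `L`. -/
def elemAt {n : ℕ} [NeZero n] (L : List (Fin n)) (k : ℕ) : Fin n := L.getD (k - 1) default

/-- The quantity `b_{ij} = u(o_i | O_{i-1} ∪ L_{j-1}) - u(o_i | O_{i-1} ∪ L_{j-1} ∪ {l_j})`. -/
noncomputable def bmat {n : ℕ} [NeZero n] (u : Finset (Fin n) → ℝ) (L O : List (Fin n))
    (i j : ℕ) : ℝ :=
  marg u (elemAt O i) (prefSet O (i - 1) ∪ prefSet L (j - 1)) -
    marg u (elemAt O i) (insert (elemAt L j) (prefSet O (i - 1) ∪ prefSet L (j - 1)))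

/-- Monotone set function. -/
def Mono {n : ℕ} (f : Finset (Fin n) → ℝ) : Prop :=
  ∀ S : Finset (Fin n), ∀ i : Fin n, f S ≤ f (insert i S)

/-- Submodular set function. -/
def Submod {n : ℕ} (f : Finset (Fin n) → ℝ) : Prop :=
  ∀ S : Finset (Fin n), ∀ i j : Fin n, i ∉ S → j ∉ S →
    marg f i (insert j S) ≤ marg f i S

/-- Second-order supermodular set function. -/
def SOSupermod {n : ℕ} (f : Finset (Fin n) → ℝ) : Prop :=
  ∀ S : Finset (Fin n), ∀ i j k : Fin n, i ∉ S → j ∉ S → k ∉ S →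
    marg f i (insert k S) - marg f i (insert j (insert k S)) ≤
      marg f i S - marg f i (insert j S)

/-- Objective value of a length-(n+1) pseudo-neighbor sequence, where costs are
counted with multiplicity via the singleton costs `cs`. -/
noncomputable def pseudoObj {n : ℕ} (u : Finset (Fin n) → ℝ) (cs : Fin n → ℝ)
    (P : List (Fin n)) : ℝ :=
  ∑ k ∈ Finset.range P.length,
    (((P.take (k + 1)).map cs).sum) * (u (prefSet P (k + 1)) - u (prefSet P k))

/-- The pseudo-neighbor of `L` obtained by inserting a second copy of the element in
(1-indexed) position `i` at (1-indexed) position `j`. -/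
def pseudoNeighbor {n : ℕ} [NeZero n] (L : List (Fin n)) (i j : ℕ) : List (Fin n) :=
  L.insertIdx (j - 1) (elemAt L i)

/-- `L` is locally optimal with respect to insertions: no pseudo-neighbor has strictly
smaller objective value. -/
def LocallyOptimalInsertions {n : ℕ} [NeZero n] (u c : Finset (Fin n) → ℝ) (cs : Fin n → ℝ)
    (L : List (Fin n)) : Prop :=
  ∀ i j : ℕ, 1 ≤ j → j < i → i ≤ n →
    objective u c L ≤ pseudoObj u cs (pseudoNeighbor L i j)

/-- The list obtained from `L` by removing the element in (1-indexed) position `i` and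
reinserting it at (1-indexed) position `j`. -/
def moveList {n : ℕ} [NeZero n] (L : List (Fin n)) (i j : ℕ) : List (Fin n) :=
  (L.eraseIdx (i - 1)).insertIdx (j - 1) (elemAt L i)

/-- `L'` is a move-neighbor of `L`. -/
def IsMoveNeighbor {n : ℕ} [NeZero n] (L L' : List (Fin n)) : Prop :=
  ∃ i j : ℕ, 1 ≤ i ∧ i ≤ n ∧ 1 ≤ j ∧ j ≤ n ∧ i ≠ j ∧ L' = moveList L i j


/-
The objective of a sequence `P` equals `∑ₘ cs(pₘ) · (u(P) - u(Pₘ))`, `Pₘ` the first `m` entries: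
each entry pays its cost for all the utility still missing when it is placed. Hence inserting a
copy of `e = πᵣ` at position `q < r` gains `∑_{m ≥ q} cs(πₘ) u(e | πₘ) - cs(e) (u([n]) - u(π_q))`,
and deleting the later copy of `e`, which turns the pseudo-neighbor into a move-neighbor, never
increases the objective. Let `D ≥ 0` bound these gains and let `O` be optimal. Writing
`u([n]) - u(πₘ) = ∑ₜ u(oₜ | Oₜ ∪ πₘ)`, for each `t` cut `π` after its longest prefix of cost at
most `2 c(O_{t+1})`. By submodularity the entries before the cut cost at most
`2 c(O_{t+1}) u(oₜ | Oₜ)`, which sums to `2 OPT`; the entries after it are bounded by the gain of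
inserting `oₜ` at the cut, `cs(oₜ) (u([n]) - u(π_q)) + D`, and these charges add up to at most
half the objective of `π`. So `M·OPT ≤ 4 OPT + 2 n D`, and the best move gains
`D ≥ (M - 4) OPT / (2n)`.
-/

namespace Finset

theorem sum_range_succ_eq_add_sum_skip {M : Type*} [AddCommMonoid M] (F : ℕ → M) {s N : ℕ}
    (hs : s ≤ N) :
    ∑ m ∈ range (N + 1), F m = F s + ∑ m ∈ range N, F (if m < s then m else m + 1) := by
  rw [sum_range, Fin.sum_univ_succAbove _ ⟨s, by omega⟩, sum_range]
  congr 1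
  refine Fintype.sum_congr _ _ fun m => ?_
  simp only [Fin.succAbove, Fin.lt_def, Fin.val_castSucc]
  split_ifs <;> rfl

theorem sum_range_sum_mul_sub {R : Type*} [CommRing R] (w f : ℕ → R) (N : ℕ) :
    ∑ k ∈ range N, (∑ m ∈ range (k + 1), w m) * (f (k + 1) - f k) =
      ∑ m ∈ range N, w m * (f N - f m) := by
  induction N with
  | zero => simp
  | succ N ih =>
    rw [sum_range_succ, ih, sum_range_succ _ N, add_mul, sum_mul, ← add_assoc,
      ← sum_add_distrib, sum_range_succ]
    congr 1
    exact sum_congr rfl fun m _ => by ring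

theorem sum_filter_sum_range_lt_le {α : Type*} [AddCommMonoid α] [LinearOrder α]
    [IsOrderedAddMonoid α] {w : ℕ → α} (hw : ∀ t, 0 ≤ w t) {x : α} (hx : 0 ≤ x) (N : ℕ) :
    ∑ t ∈ (range N).filter (fun t => ∑ s ∈ range (t + 1), w s < x), w t ≤ x := by
  induction N with
  | zero => simpa
  | succ N ih =>
    by_cases hN : ∑ s ∈ range (N + 1), w s < x
    · have hall : (range (N + 1)).filter (fun t => ∑ s ∈ range (t + 1), w s < x) =
          range (N + 1) := by
        refine filter_true_of_mem fun t ht => lt_of_le_of_lt ?_ hN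
        exact sum_le_sum_of_subset_of_nonneg (range_subset_range.2 (mem_range.1 ht))
          fun s _ _ => hw s
      rw [hall]
      exact hN.le
    · rwa [range_add_one, filter_insert, if_neg hN]

end Finset

section Prefixes

variable {n : ℕ}

theorem prefSet_zero (L : List (Fin n)) : prefSet L 0 = ∅ := by simp [prefSet]

theorem prefSet_of_length_le {L : List (Fin n)} {k : ℕ} (h : L.length ≤ k) :
    prefSet L k = L.toFinset := by
  simp [prefSet, List.take_of_length_le h]

theorem prefSet_subset_toFinset (L : List (Fin n)) (k : ℕ) : prefSet L k ⊆ L.toFinset :=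
  fun _ hx => List.mem_toFinset.2 (List.take_subset k L (List.mem_toFinset.1 hx))

theorem prefSet_mono (L : List (Fin n)) : Monotone (prefSet L) := fun _ _ h _ hx =>
  List.mem_toFinset.2 ((List.take_prefix_take_left h).subset (List.mem_toFinset.1 hx))

theorem prefSet_eraseIdx_of_le (P : List (Fin n)) {s m : ℕ} (h : m ≤ s) :
    prefSet (P.eraseIdx s) m = prefSet P m := by
  rw [prefSet, List.take_eraseIdx_eq_take_of_le _ _ _ h, prefSet]

theorem prefSet_insertIdx_of_le (L : List (Fin n)) (e : Fin n) {q m : ℕ} (h : m ≤ q) :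
    prefSet (L.insertIdx q e) m = prefSet L m := by
  rw [prefSet, List.take_insertIdx_eq_take_of_le _ _ _ _ h, prefSet]

theorem IsPermList.toFinset_eq {L : List (Fin n)} (hL : IsPermList L) : L.toFinset = univ :=
  eq_univ_of_forall fun x => List.mem_toFinset.2 (hL.2 x)

theorem IsPermList.length_eq {L : List (Fin n)} (hL : IsPermList L) : L.length = n := by
  simpa [hL.toFinset_eq] using (List.toFinset_card_of_nodup hL.1).symm

theorem IsPermList.prefSet_eq_univ {L : List (Fin n)} (hL : IsPermList L) :
    prefSet L n = univ := by
  rw [prefSet_of_length_le hL.length_eq.le, hL.toFinset_eq]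

variable [NeZero n]

theorem prefSet_succ (L : List (Fin n)) {k : ℕ} (hk : k < L.length) :
    prefSet L (k + 1) = insert (L.getD k default) (prefSet L k) := by
  rw [prefSet, prefSet, List.take_add_one, List.getElem?_eq_getElem hk,
    List.getD_eq_getElem _ _ hk, Option.toList_some, List.toFinset_append, List.toFinset_cons,
    List.toFinset_nil, insert_empty_eq, union_comm, ← insert_eq]

theorem getD_mem_prefSet (L : List (Fin n)) {k m : ℕ} (hk : k < m) (hm : m ≤ L.length) :
    L.getD k default ∈ prefSet L m :=
  prefSet_mono L hk (prefSet_succ L (by omega : k < L.length) ▸ mem_insert_self _ _)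

theorem getD_eraseIdx (P : List (Fin n)) (s m : ℕ) :
    (P.eraseIdx s).getD m default = P.getD (if m < s then m else m + 1) default := by
  simp only [List.getD_eq_getElem?_getD, List.getElem?_eraseIdx]
  split_ifs <;> rfl

theorem prefSet_succ_eq_insert_prefSet_eraseIdx (P : List (Fin n)) {s m : ℕ}
    (hs : s < P.length) (h : s ≤ m) :
    prefSet P (m + 1) = insert (P.getD s default) (prefSet (P.eraseIdx s) m) := by
  have htake : (P.eraseIdx s).take m = (P.take (m + 1)).eraseIdx s := by
    apply List.ext_getElem <;> grind
  have hs' : s < (P.take (m + 1)).length := by grind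
  rw [prefSet, prefSet, htake,
    ← List.toFinset_eq_of_perm _ _ (List.getElem_cons_eraseIdx_perm hs'), List.toFinset_cons,
    List.getD_eq_getElem _ _ hs, List.getElem_take]

end Prefixes

section Marginals

variable {n : ℕ} {u : Finset (Fin n) → ℝ}

theorem Mono.monotone (hm : Mono u) : Monotone u :=
  monotone_iff_forall_le_insert.2 fun S a _ => hm S a

theorem marg_nonneg (hm : Mono u) (e : Fin n) (S : Finset (Fin n)) : 0 ≤ marg u e S :=
  sub_nonneg.2 (hm S e)

theorem marg_eq_zero_of_mem {e : Fin n} {S : Finset (Fin n)} (he : e ∈ S) : marg u e S = 0 := by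
  rw [marg, insert_eq_of_mem he, sub_self]

theorem marg_le_sub_of_subset (hm : Mono u) {e : Fin n} {S T : Finset (Fin n)} (hST : S ⊆ T)
    (he : e ∈ T) : marg u e S ≤ u T - u S :=
  sub_le_sub_right (hm.monotone (insert_subset he hST)) _

theorem Submod.antitone_marg (hs : Submod u) (e : Fin n) : Antitone (marg u e) := by
  refine antitone_iff_forall_insert_le.2 fun S a ha => ?_
  by_cases he : e ∈ S
  · rw [marg_eq_zero_of_mem he, marg_eq_zero_of_mem (mem_insert_of_mem he)]
  · exact hs S e a he ha

end Marginals

section ClosedForm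

variable {n : ℕ} {u c : Finset (Fin n) → ℝ} {cs : Fin n → ℝ}

theorem cost_prefSet_eq_sum_map_take (hc : ∀ S, c S = ∑ i ∈ S, cs i) {L : List (Fin n)}
    (hL : L.Nodup) (k : ℕ) : c (prefSet L k) = ((L.take k).map cs).sum := by
  rw [hc, prefSet, List.sum_toFinset _ (hL.sublist (List.take_sublist _ _))]

theorem objective_eq_pseudoObj (hc : ∀ S, c S = ∑ i ∈ S, cs i) {L : List (Fin n)}
    (hL : L.Nodup) : objective u c L = pseudoObj u cs L := by
  simp only [objective, pseudoObj, cost_prefSet_eq_sum_map_take hc hL]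

variable [NeZero n]

theorem sum_map_take_eq_sum_range (cs : Fin n → ℝ) (P : List (Fin n)) {k : ℕ}
    (hk : k ≤ P.length) : ((P.take k).map cs).sum = ∑ m ∈ range k, cs (P.getD m default) := by
  induction k with
  | zero => simp
  | succ k ih =>
    rw [List.take_add_one, List.getElem?_eq_getElem hk, List.map_append, List.sum_append,
      ih (by omega), sum_range_succ, List.getD_eq_getElem _ _ hk]
    simp

theorem cost_prefSet_eq_sum (hc : ∀ S, c S = ∑ i ∈ S, cs i) {L : List (Fin n)} (hL : L.Nodup)
    {k : ℕ} (hk : k ≤ L.length) : c (prefSet L k) = ∑ m ∈ range k, cs (L.getD m default) := by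
  rw [cost_prefSet_eq_sum_map_take hc hL, sum_map_take_eq_sum_range cs L hk]

theorem pseudoObj_eq_sum (u : Finset (Fin n) → ℝ) (cs : Fin n → ℝ) (P : List (Fin n)) :
    pseudoObj u cs P =
      ∑ m ∈ range P.length, cs (P.getD m default) * (u P.toFinset - u (prefSet P m)) := by
  rw [pseudoObj, ← prefSet_of_length_le le_rfl,
    ← sum_range_sum_mul_sub (fun m => cs (P.getD m default)) (fun k => u (prefSet P k))]
  exact sum_congr rfl fun k hk => by rw [sum_map_take_eq_sum_range cs P (mem_range.1 hk)]

theorem objective_eq_sum_cost_mul_marg (u c : Finset (Fin n) → ℝ) (L : List (Fin n)) :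
    objective u c L =
      ∑ k ∈ range L.length, c (prefSet L (k + 1)) * marg u (L.getD k default) (prefSet L k) :=
  sum_congr rfl fun k hk => by rw [marg, ← prefSet_succ L (mem_range.1 hk)]

end ClosedForm

section Neighbors

variable {n : ℕ} [NeZero n] {u c : Finset (Fin n) → ℝ} {cs : Fin n → ℝ}

theorem pseudoObj_eq_add_sum_eraseIdx (u : Finset (Fin n) → ℝ) (cs : Fin n → ℝ)
    {P : List (Fin n)} {s : ℕ} (hs : s < P.length) :
    pseudoObj u cs P = cs (P.getD s default) * (u P.toFinset - u (prefSet P s)) +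
      ∑ m ∈ range (P.eraseIdx s).length, cs ((P.eraseIdx s).getD m default) *
        (u P.toFinset - u (if m < s then prefSet (P.eraseIdx s) m
          else insert (P.getD s default) (prefSet (P.eraseIdx s) m))) := by
  obtain ⟨N, hN⟩ : ∃ N, P.length = N + 1 := ⟨P.length - 1, by omega⟩
  rw [pseudoObj_eq_sum, hN, sum_range_succ_eq_add_sum_skip _ (by omega : s ≤ N),
    List.length_eraseIdx_of_lt hs, hN, Nat.add_sub_cancel]
  congr 1
  refine sum_congr rfl fun m _ => ?_
  rw [getD_eraseIdx]
  split_ifs with hms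
  · rw [prefSet_eraseIdx_of_le P hms.le]
  · rw [prefSet_succ_eq_insert_prefSet_eraseIdx P hs (by omega)]

theorem pseudoObj_eq_add_pseudoObj_eraseIdx (u : Finset (Fin n) → ℝ) (cs : Fin n → ℝ)
    {P : List (Fin n)} {s : ℕ} (hs : s < P.length) (hdup : P.getD s default ∈ prefSet P s) :
    pseudoObj u cs P = cs (P.getD s default) * (u P.toFinset - u (prefSet P s)) +
      pseudoObj u cs (P.eraseIdx s) := by
  have hins : ∀ m, s ≤ m →
      insert (P.getD s default) (prefSet (P.eraseIdx s) m) = prefSet (P.eraseIdx s) m :=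
    fun m hm => insert_eq_of_mem (prefSet_mono _ hm (prefSet_eraseIdx_of_le P le_rfl ▸ hdup))
  have htoFinset : (P.eraseIdx s).toFinset = P.toFinset := by
    rw [← prefSet_of_length_le le_rfl, ← hins _ (by grind),
      ← prefSet_succ_eq_insert_prefSet_eraseIdx P hs (by grind), prefSet_of_length_le (by grind)]
  rw [pseudoObj_eq_add_sum_eraseIdx u cs hs, pseudoObj_eq_sum, htoFinset]
  congr 1
  refine sum_congr rfl fun m _ => ?_
  split_ifs with hms
  · rfl
  · rw [hins m (by omega)]

theorem pseudoObj_eraseIdx_le (hm : Mono u) (hcs : ∀ i, 0 ≤ cs i) {P : List (Fin n)} {s : ℕ}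
    (hs : s < P.length) (hdup : P.getD s default ∈ prefSet P s) :
    pseudoObj u cs (P.eraseIdx s) ≤ pseudoObj u cs P := by
  rw [pseudoObj_eq_add_pseudoObj_eraseIdx u cs hs hdup, le_add_iff_nonneg_left]
  exact mul_nonneg (hcs _) (sub_nonneg.2 (hm.monotone (prefSet_subset_toFinset P s)))

theorem objective_moveList_le_pseudoObj (hc : ∀ S, c S = ∑ i ∈ S, cs i) (hm : Mono u)
    (hcs : ∀ i, 0 ≤ cs i) {L : List (Fin n)} (hL : L.Nodup) {q r : ℕ} (hqr : q < r)
    (hr : r < L.length) :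
    objective u c (moveList L (r + 1) (q + 1)) ≤
      pseudoObj u cs (L.insertIdx q (L.getD r default)) := by
  set e := L.getD r default
  set P := L.insertIdx q e
  have hmove : moveList L (r + 1) (q + 1) = P.eraseIdx (r + 1) := by
    simp only [moveList, elemAt, Nat.add_sub_cancel]
    exact List.insertIdx_eraseIdx_of_le hr hqr.le
  have hPlen : P.length = L.length + 1 := List.length_insertIdx_of_le_length (by omega) e
  have hPr : P.getD (r + 1) default = e := by
    rw [List.getD_eq_getElem _ _ (by omega), List.getElem_insertIdx_of_gt (by omega)]
    simp only [Nat.add_sub_cancel]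
    exact (List.getD_eq_getElem _ _ hr).symm
  have hPq : P.getD q default = e := by
    rw [List.getD_eq_getElem _ _ (by omega), List.getElem_insertIdx_self]
  have hnodup : (P.eraseIdx (r + 1)).Nodup := by
    rw [← hmove, moveList, elemAt, Nat.add_sub_cancel]
    refine ((List.perm_insertIdx _ _ ?_).trans ?_).nodup_iff.2 hL
    · rw [List.length_eraseIdx_of_lt hr]; omega
    · rw [List.getD_eq_getElem _ _ hr]; exact List.getElem_cons_eraseIdx_perm hr
  rw [hmove, objective_eq_pseudoObj hc hnodup]
  exact pseudoObj_eraseIdx_le hm hcs (by omega)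
    (hPr ▸ hPq ▸ getD_mem_prefSet P (by omega) (by omega))

theorem pseudoObj_sub_pseudoObj_insertIdx (u : Finset (Fin n) → ℝ) (cs : Fin n → ℝ)
    {L : List (Fin n)} {e : Fin n} (he : e ∈ L) {q : ℕ} (hq : q ≤ L.length) :
    pseudoObj u cs L - pseudoObj u cs (L.insertIdx q e) =
      ∑ m ∈ Ico q L.length, cs (L.getD m default) * marg u e (prefSet L m) -
        cs e * (u L.toFinset - u (prefSet L q)) := by
  have hlen : q < (L.insertIdx q e).length := by
    rw [List.length_insertIdx_of_le_length hq]; omega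
  have htoFinset : (L.insertIdx q e).toFinset = L.toFinset := by
    rw [List.toFinset_eq_of_perm _ _ (List.perm_insertIdx e L hq), List.toFinset_cons,
      insert_eq_of_mem (List.mem_toFinset.2 he)]
  rw [pseudoObj_eq_add_sum_eraseIdx u cs hlen, List.eraseIdx_insertIdx_self,
    List.getD_eq_getElem _ _ hlen, List.getElem_insertIdx_self,
    prefSet_insertIdx_of_le L e le_rfl, htoFinset, pseudoObj_eq_sum,
    ← sum_range_add_sum_Ico _ hq, ← sum_range_add_sum_Ico _ hq]
  have hlow : ∑ m ∈ range q, cs (L.getD m default) *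
      (u L.toFinset - u (if m < q then prefSet L m else insert e (prefSet L m))) =
      ∑ m ∈ range q, cs (L.getD m default) * (u L.toFinset - u (prefSet L m)) :=
    sum_congr rfl fun m hm => by rw [if_pos (mem_range.1 hm)]
  have hhigh :
      ∑ m ∈ Ico q L.length, cs (L.getD m default) * (u L.toFinset - u (prefSet L m)) -
        ∑ m ∈ Ico q L.length, cs (L.getD m default) *
          (u L.toFinset - u (if m < q then prefSet L m else insert e (prefSet L m))) =
      ∑ m ∈ Ico q L.length, cs (L.getD m default) * marg u e (prefSet L m) := by
    rw [← sum_sub_distrib]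
    refine sum_congr rfl fun m hm => ?_
    rw [if_neg (by simp at hm; omega), marg]
    ring
  rw [hlow, ← hhigh]
  ring

end Neighbors

/-- Positions `q < r` are 0-indexed here, unlike in `pseudoNeighbor`. -/
def InsertionGainLE {n : ℕ} [NeZero n] (u : Finset (Fin n) → ℝ) (cs : Fin n → ℝ)
    (L : List (Fin n)) (D : ℝ) : Prop :=
  ∀ q r, q < r → r < n → pseudoObj u cs L - pseudoObj u cs (L.insertIdx q (L.getD r default)) ≤ D

noncomputable def cutIndex {n : ℕ} (c : Finset (Fin n) → ℝ) (L O : List (Fin n)) (t : ℕ) : ℕ :=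
  Nat.findGreatest (fun q => c (prefSet L q) ≤ 2 * c (prefSet O (t + 1))) n

section Comparison

variable {n : ℕ} {u c : Finset (Fin n) → ℝ} {cs : Fin n → ℝ}

theorem sum_mul_sub_prefSet_le (hm : Mono u) {L : List (Fin n)} (hL : IsPermList L)
    {w : ℕ → ℝ} {Q : ℕ → ℕ} (hQ : ∀ t, Q t ≤ n)
    (hweight : ∀ k < n,
      ∑ t ∈ (range n).filter (fun t => Q t ≤ k), w t ≤ c (prefSet L (k + 1)) / 2) :
    ∑ t ∈ range n, w t * (u univ - u (prefSet L (Q t))) ≤ objective u c L / 2 := by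
  set Δ : ℕ → ℝ := fun k => u (prefSet L (k + 1)) - u (prefSet L k)
  have htail : ∀ q ≤ n, u univ - u (prefSet L q) = ∑ k ∈ range n, if q ≤ k then Δ k else 0 := by
    intro q hq
    have hIco : (range n).filter (fun k => q ≤ k) = Ico q n := by ext; simp; omega
    rw [← sum_filter, hIco, sum_Ico_sub (fun k => u (prefSet L k)) hq, hL.prefSet_eq_univ]
  calc ∑ t ∈ range n, w t * (u univ - u (prefSet L (Q t)))
      = ∑ k ∈ range n, (∑ t ∈ (range n).filter (fun t => Q t ≤ k), w t) * Δ k := by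
        simp_rw [htail _ (hQ _), mul_sum, sum_filter, sum_mul]
        rw [sum_comm]
        exact sum_congr rfl fun k _ => sum_congr rfl fun t _ => by split_ifs <;> simp
    _ ≤ ∑ k ∈ range n, c (prefSet L (k + 1)) / 2 * Δ k :=
        sum_le_sum fun k hk => mul_le_mul_of_nonneg_right (hweight k (mem_range.1 hk))
          (sub_nonneg.2 (hm.monotone (prefSet_mono L k.le_succ)))
    _ = objective u c L / 2 := by
        rw [objective, hL.length_eq, sum_div]
        exact sum_congr rfl fun k _ => by ring

theorem cost_nonneg (hc : ∀ S, c S = ∑ i ∈ S, cs i) (hcs : ∀ i, 0 ≤ cs i) (S : Finset (Fin n)) :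
    0 ≤ c S :=
  hc S ▸ sum_nonneg fun i _ => hcs i

theorem cutIndex_le (c : Finset (Fin n) → ℝ) (L O : List (Fin n)) (t : ℕ) :
    cutIndex c L O t ≤ n :=
  Nat.findGreatest_le n

theorem cost_prefSet_cutIndex_le (hc : ∀ S, c S = ∑ i ∈ S, cs i) (hcs : ∀ i, 0 ≤ cs i)
    (L O : List (Fin n)) (t : ℕ) :
    c (prefSet L (cutIndex c L O t)) ≤ 2 * c (prefSet O (t + 1)) := by
  refine Nat.findGreatest_spec (P := fun q => c (prefSet L q) ≤ 2 * c (prefSet O (t + 1)))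
    (Nat.zero_le n) ?_
  rw [prefSet_zero, hc, sum_empty]
  linarith [cost_nonneg hc hcs (prefSet O (t + 1))]

variable [NeZero n]

theorem sum_marg_prefSet_union {O : List (Fin n)} (hO : IsPermList O) (S : Finset (Fin n)) :
    ∑ t ∈ range n, marg u (O.getD t default) (prefSet O t ∪ S) = u univ - u S := by
  have hstep : ∀ t ∈ range n, marg u (O.getD t default) (prefSet O t ∪ S) =
      u (prefSet O (t + 1) ∪ S) - u (prefSet O t ∪ S) := fun t ht => by
    rw [marg, prefSet_succ O (by rw [hO.length_eq]; exact mem_range.1 ht), insert_union]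
  rw [sum_congr rfl hstep, sum_range_sub (fun t => u (prefSet O t ∪ S)), hO.prefSet_eq_univ,
    prefSet_zero, empty_union, union_eq_left.2 (subset_univ S)]

theorem objective_eq_sum_sum_marg (hc : ∀ S, c S = ∑ i ∈ S, cs i) {L O : List (Fin n)}
    (hL : IsPermList L) (hO : IsPermList O) :
    objective u c L = ∑ t ∈ range n, ∑ m ∈ range n,
      cs (L.getD m default) * marg u (O.getD t default) (prefSet O t ∪ prefSet L m) := by
  rw [objective_eq_pseudoObj hc hL.1, pseudoObj_eq_sum, hL.toFinset_eq, hL.length_eq, sum_comm]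
  exact sum_congr rfl fun m _ => by rw [← mul_sum, sum_marg_prefSet_union hO]

theorem sum_Ico_mul_marg_le (hm : Mono u) (hcs : ∀ i, 0 ≤ cs i) {L : List (Fin n)}
    (hL : IsPermList L) {D : ℝ} (hD : 0 ≤ D) (hgain : InsertionGainLE u cs L D) (e : Fin n)
    {q : ℕ} (hq : q ≤ n) :
    ∑ m ∈ Ico q n, cs (L.getD m default) * marg u e (prefSet L m) ≤
      cs e * (u univ - u (prefSet L q)) + D := by
  obtain ⟨r, hr, hre⟩ := List.getElem_of_mem (hL.2 e)
  rw [← List.getD_eq_getElem _ default hr] at hre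
  rw [hL.length_eq] at hr
  have hrest : 0 ≤ cs e * (u univ - u (prefSet L q)) :=
    mul_nonneg (hcs e) (sub_nonneg.2 (hm.monotone (subset_univ _)))
  rcases lt_or_ge q r with hqr | hrq
  · have h := hgain q r hqr hr
    rwa [hre, pseudoObj_sub_pseudoObj_insertIdx u cs (hL.2 e) (by rw [hL.length_eq]; omega),
      hL.length_eq, hL.toFinset_eq, sub_le_iff_le_add'] at h
  · -- `e` lies in every prefix longer than `r`, so only the term `m = q = r` can be nonzero
    have hterm : ∀ m ∈ Ico q n, cs (L.getD m default) * marg u e (prefSet L m) ≤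
        if m = q then cs e * (u univ - u (prefSet L q)) else 0 := by
      intro m hm'
      rw [mem_Ico] at hm'
      rcases eq_or_lt_of_le (hrq.trans hm'.1) with rfl | hrm
      · rw [if_pos (by omega), hre, show q = r by omega]
        exact mul_le_mul_of_nonneg_left
          (marg_le_sub_of_subset hm (subset_univ _) (mem_univ e)) (hcs e)
      · have he_mem : e ∈ prefSet L m :=
          hre ▸ getD_mem_prefSet L hrm (by rw [hL.length_eq]; omega)
        rw [marg_eq_zero_of_mem he_mem, mul_zero]
        split_ifs
        exacts [hrest, le_rfl]
    refine (sum_le_sum hterm).trans ?_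
    rw [sum_ite_eq']
    split_ifs <;> linarith

theorem sum_mul_marg_union_le (hc : ∀ S, c S = ∑ i ∈ S, cs i) (hm : Mono u) (hs : Submod u)
    (hcs : ∀ i, 0 ≤ cs i) {L : List (Fin n)} (hL : IsPermList L) {D : ℝ} (hD : 0 ≤ D)
    (hgain : InsertionGainLE u cs L D) (e : Fin n) (S : Finset (Fin n)) {q : ℕ} (hq : q ≤ n) :
    ∑ m ∈ range n, cs (L.getD m default) * marg u e (S ∪ prefSet L m) ≤
      c (prefSet L q) * marg u e S + cs e * (u univ - u (prefSet L q)) + D := by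
  rw [← sum_range_add_sum_Ico _ hq, add_assoc]
  gcongr ?_ + ?_
  · rw [cost_prefSet_eq_sum hc hL.1 (hL.length_eq.symm ▸ hq), sum_mul]
    exact sum_le_sum fun m _ =>
      mul_le_mul_of_nonneg_left (hs.antitone_marg e subset_union_left) (hcs _)
  · refine (sum_le_sum fun m _ => ?_).trans (sum_Ico_mul_marg_le hm hcs hL hD hgain e hq)
    exact mul_le_mul_of_nonneg_left (hs.antitone_marg e subset_union_right) (hcs _)

theorem sum_filter_cutIndex_le (hc : ∀ S, c S = ∑ i ∈ S, cs i) (hcs : ∀ i, 0 ≤ cs i)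
    (L : List (Fin n)) {O : List (Fin n)} (hO : IsPermList O) {k : ℕ} (hk : k < n) :
    ∑ t ∈ (range n).filter (fun t => cutIndex c L O t ≤ k), cs (O.getD t default) ≤
      c (prefSet L (k + 1)) / 2 := by
  refine le_trans (sum_le_sum_of_subset_of_nonneg (fun t ht => ?_) fun t _ _ => hcs _)
    (sum_filter_sum_range_lt_le (fun t => hcs _)
      (by linarith [cost_nonneg hc hcs (prefSet L (k + 1))]) n)
  rw [mem_filter] at ht ⊢
  refine ⟨ht.1, ?_⟩
  have hlt := Nat.findGreatest_is_greatest (Nat.lt_succ_of_le ht.2) (by omega : k + 1 ≤ n)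
  rw [← cost_prefSet_eq_sum hc hO.1 (by rw [hO.length_eq]; exact mem_range.1 ht.1)]
  linarith [not_le.1 hlt]

theorem objective_le_four_mul_add (hc : ∀ S, c S = ∑ i ∈ S, cs i) (hm : Mono u)
    (hs : Submod u) (hcs : ∀ i, 0 ≤ cs i) {L O : List (Fin n)} (hL : IsPermList L)
    (hO : IsPermList O) {D : ℝ} (hD : 0 ≤ D) (hgain : InsertionGainLE u cs L D) :
    objective u c L ≤ 4 * objective u c O + 2 * n * D := by
  set Q := cutIndex c L O
  have hL_bound : objective u c L ≤ ∑ t ∈ range n,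
      (c (prefSet L (Q t)) * marg u (O.getD t default) (prefSet O t) +
        cs (O.getD t default) * (u univ - u (prefSet L (Q t))) + D) := by
    rw [objective_eq_sum_sum_marg hc hL hO]
    exact sum_le_sum fun t _ =>
      sum_mul_marg_union_le hc hm hs hcs hL hD hgain _ _ (cutIndex_le c L O t)
  have hO_bound :
      ∑ t ∈ range n, c (prefSet L (Q t)) * marg u (O.getD t default) (prefSet O t) ≤
        2 * objective u c O := by
    rw [objective_eq_sum_cost_mul_marg, hO.length_eq, mul_sum]
    exact sum_le_sum fun t _ => (mul_le_mul_of_nonneg_right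
      (cost_prefSet_cutIndex_le hc hcs L O t) (marg_nonneg hm _ _)).trans (mul_assoc _ _ _).le
  have hweight_bound := sum_mul_sub_prefSet_le hm hL (cutIndex_le c L O)
    fun k hk => sum_filter_cutIndex_le hc hcs L hO hk
  rw [sum_add_distrib, sum_add_distrib, sum_const, card_range, nsmul_eq_mul] at hL_bound
  linarith

end Comparison

theorem exists_insertionGainLE_of_not_locallyOptimal {n : ℕ} [NeZero n]
    {u c : Finset (Fin n) → ℝ} {cs : Fin n → ℝ} (hc : ∀ S, c S = ∑ i ∈ S, cs i)
    {L : List (Fin n)} (hL : L.Nodup) (hLO : ¬ LocallyOptimalInsertions u c cs L) :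
    ∃ q r, q < r ∧ r < n ∧
      pseudoObj u cs (L.insertIdx q (L.getD r default)) < pseudoObj u cs L ∧
      InsertionGainLE u cs L
        (pseudoObj u cs L - pseudoObj u cs (L.insertIdx q (L.getD r default))) := by
  set pairs := (range n ×ˢ range n).filter (fun p : ℕ × ℕ => p.1 < p.2)
  have hpairs : ∀ q r, (q, r) ∈ pairs ↔ q < r ∧ r < n := fun q r => by
    simp only [pairs, mem_filter, mem_product, mem_range]; omega
  simp only [LocallyOptimalInsertions, objective_eq_pseudoObj hc hL, not_forall, not_le,
    exists_prop] at hLO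
  obtain ⟨i, j, hj, hji, hi, hgain⟩ := hLO
  rw [pseudoNeighbor, elemAt] at hgain
  have hij : (j - 1, i - 1) ∈ pairs := (hpairs _ _).2 ⟨by omega, by omega⟩
  obtain ⟨⟨q, r⟩, hqr, hmax⟩ := pairs.exists_max_image
    (fun p => pseudoObj u cs L - pseudoObj u cs (L.insertIdx p.1 (L.getD p.2 default))) ⟨_, hij⟩
  obtain ⟨hqr, hr⟩ := (hpairs q r).1 hqr
  have hmax_ij := hmax _ hij
  dsimp only at hmax_ij
  exact ⟨q, r, hqr, hr, by linarith, fun q' r' h h' => hmax (q', r') ((hpairs _ _).2 ⟨h, h'⟩)⟩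

theorem improvement_step_general (n : ℕ) [NeZero n] (u c : Finset (Fin n) → ℝ) (cs : Fin n → ℝ)
    (hu_mono : Mono u)
    (hu_sub : Submod u)
    (hcs_pos : ∀ i, 0 < cs i) (hc : ∀ S, c S = ∑ i ∈ S, cs i)
    (OPT M : ℝ)
    (hOPT_att : ∃ O, IsPermList O ∧ objective u c O = OPT)
    (π : List (Fin n)) (hπ : IsPermList π) (hM : objective u c π = M * OPT) :
    LocallyOptimalInsertions u c cs π ∨
      ∃ π', IsMoveNeighbor π π' ∧
        objective u c π' ≤ (M - (M - 4) / (2 * n)) * OPT := by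
  by_cases hLO : LocallyOptimalInsertions u c cs π
  · exact Or.inl hLO
  right
  have hcs : ∀ i, 0 ≤ cs i := fun i => (hcs_pos i).le
  obtain ⟨q, r, hqr, hr, himp, hgain⟩ :=
    exists_insertionGainLE_of_not_locallyOptimal hc hπ.1 hLO
  obtain ⟨O, hO, rfl⟩ := hOPT_att
  have hcore := objective_le_four_mul_add hc hu_mono hu_sub hcs hπ hO (sub_pos.2 himp).le hgain
  have hmove := objective_moveList_le_pseudoObj hc hu_mono hcs hπ.1 hqr
    (hπ.length_eq.symm ▸ hr)
  refine ⟨moveList π (r + 1) (q + 1),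
    ⟨r + 1, q + 1, by omega, by omega, by omega, by omega, by omega, rfl⟩, ?_⟩
  rw [objective_eq_pseudoObj hc hπ.1] at hM hcore
  have hn : (0 : ℝ) < 2 * n := by have := NeZero.pos n; positivity
  have hgain_lb : (M - 4) / (2 * n) * objective u c O ≤
      pseudoObj u cs π - pseudoObj u cs (π.insertIdx q (π.getD r default)) := by
    rw [div_mul_eq_mul_div, div_le_iff₀ hn]; linarith
  rw [sub_mul]
  linarith

theorem improvement_step (n : ℕ) [NeZero n] (u c : Finset (Fin n) → ℝ) (cs : Fin n → ℝ)
    (hu0 : u ∅ = 0) (hu_nonneg : ∀ S, 0 ≤ u S) (hu_mono : Mono u)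
    (hu_sub : Submod u) (hu_sos : SOSupermod u)
    (hcs_pos : ∀ i, 0 < cs i) (hc : ∀ S, c S = ∑ i ∈ S, cs i)
    (OPT M : ℝ) (hOPT_pos : 0 < OPT)
    (hOPT_lb : ∀ O, IsPermList O → OPT ≤ objective u c O)
    (hOPT_att : ∃ O, IsPermList O ∧ objective u c O = OPT)
    (π : List (Fin n)) (hπ : IsPermList π) (hM : objective u c π = M * OPT) :
    LocallyOptimalInsertions u c cs π ∨
      ∃ π', IsMoveNeighbor π π' ∧
        objective u c π' ≤ (M - (M - 4) / (2 * n)) * OPT :=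
  improvement_step_general n u c cs hu_mono hu_sub hcs_pos hc OPT M hOPT_att π hπ hM
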